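/- If two labeled triangulations of the convex pentagon have the same underlying unlabeled triangulation but transposed diagonal labels, any flip sequence connecting them has length at least 5. -/
import Mathlib


open scoped Classical

/-- `(a, b)` is a diagonal of the convex `n`-gon with vertices `0, …, n-1`
(pairs of non-adjacent vertices, written with `a < b`). -/
def IsDiag (n a b : ℕ) : Prop :=
  a < b ∧ b < n ∧ a + 2 ≤ b ∧ ¬(a = 0 ∧ b = n - 1)

/-- Two diagonals (as sorted pairs) of a convex polygon cross, i.e. their
endpoint pairs interleave in the cyclic order. -/
def Cross (p q : ℕ × ℕ) : Prop :=
  (p.1 < q.1 ∧ q.1 < p.2 ∧ p.2 < q.2) ∨ (q.1 < p.1 ∧ p.1 < q.2 ∧ q.2 < p.2)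

/-- `T` is a triangulation of the convex `n`-gon: a maximal set of pairwise
non-crossing diagonals. -/
def IsTriangulation (n : ℕ) (T : Finset (ℕ × ℕ)) : Prop :=
  (∀ p ∈ T, IsDiag n p.1 p.2) ∧
  (∀ p ∈ T, ∀ q ∈ T, p ≠ q → ¬ Cross p q) ∧
  (∀ p : ℕ × ℕ, IsDiag n p.1 p.2 → p ∉ T → ∃ q ∈ T, Cross p q)

/-- `T'` is obtained from `T` by a single flip: one diagonal is removed and
another is inserted, the result being again a triangulation. -/
def Flip (n : ℕ) (T T' : Finset (ℕ × ℕ)) : Prop :=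
  IsTriangulation n T ∧ IsTriangulation n T' ∧
  ∃ d d', d ∈ T ∧ d' ∉ T ∧ T' = insert d' (T.erase d)

/-- There is a sequence of exactly `k` flips transforming `T` into `T'`. -/
def FlipSeq (n k : ℕ) (T T' : Finset (ℕ × ℕ)) : Prop :=
  ∃ s : ℕ → Finset (ℕ × ℕ), s 0 = T ∧ s k = T' ∧ ∀ i < k, Flip n (s i) (s (i + 1))



/-- An edge-labeled triangulation of the convex pentagon: an (unlabeled)
triangulation together with the positions of the two diagonal labels
(labels indexed by `Bool`). -/
structure LT5 where
  /-- the underlying unlabeled triangulation -/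
  T : Finset (ℕ × ℕ)
  /-- the diagonal carrying each of the two labels -/
  pos : Bool → ℕ × ℕ
  tri : IsTriangulation 5 T
  mem : ∀ b, pos b ∈ T
  inj : pos true ≠ pos false

/-- A labeled flip: remove a diagonal, insert the other diagonal of the empty
quadrilateral, and transfer the removed diagonal's label to the inserted one. -/
def LFlip (X Y : LT5) : Prop :=
  ∃ d d' : ℕ × ℕ, d ∈ X.T ∧ d' ∉ X.T ∧ Y.T = insert d' (X.T.erase d) ∧
    ∀ b, Y.pos b = if X.pos b = d then d' else X.pos b

/-- A sequence of exactly `k` labeled flips from `X` to `Y`. -/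
def LFlipSeq (k : ℕ) (X Y : LT5) : Prop :=
  ∃ s : ℕ → LT5, s 0 = X ∧ s k = Y ∧ ∀ i < k, LFlip (s i) (s (i + 1))

/-! ### Auxiliary material -/

instance instDecCross (p q : ℕ × ℕ) : Decidable (Cross p q) :=
  inferInstanceAs (Decidable ((p.1 < q.1 ∧ q.1 < p.2 ∧ p.2 < q.2) ∨
    (q.1 < p.1 ∧ p.1 < q.2 ∧ q.2 < p.2)))

/-- The five diagonals of the pentagon. -/
def D5 : List (ℕ × ℕ) := [(0,2),(0,3),(1,3),(1,4),(2,4)]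

/-- The ten ordered noncrossing pairs of distinct diagonals. -/
def L10 : List ((ℕ × ℕ) × (ℕ × ℕ)) :=
  [((0,2),(0,3)), ((0,3),(0,2)), ((0,2),(2,4)), ((2,4),(0,2)),
   ((1,4),(2,4)), ((2,4),(1,4)), ((1,4),(1,3)), ((1,3),(1,4)),
   ((0,3),(1,3)), ((1,3),(0,3))]

/-- Position of a labeled triangulation along the 10-cycle. -/
def code : (ℕ × ℕ) × (ℕ × ℕ) → ZMod 10
  | ((0,2),(0,3)) => 0
  | ((0,3),(0,2)) => 5
  | ((0,2),(2,4)) => 1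
  | ((2,4),(0,2)) => 6
  | ((1,4),(2,4)) => 2
  | ((2,4),(1,4)) => 7
  | ((1,4),(1,3)) => 3
  | ((1,3),(1,4)) => 8
  | ((0,3),(1,3)) => 4
  | ((1,3),(0,3)) => 9
  | _ => 0

lemma isDiag_mem_D5 (p : ℕ × ℕ) (h : IsDiag 5 p.1 p.2) : p ∈ D5 := by
  obtain ⟨a, b⟩ := p
  obtain ⟨h1, h2, h3, h4⟩ := h
  simp only [D5, List.mem_cons, List.not_mem_nil, or_false, Prod.mk.injEq]
  simp only at h1 h2 h3 h4
  omega

lemma T_eq_pair (X : LT5) : X.T = {X.pos true, X.pos false} := by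
  apply Finset.ext; intro w
  simp only [Finset.mem_insert, Finset.mem_singleton]
  constructor
  · intro hw
    by_contra hcon
    push_neg at hcon
    obtain ⟨h1, h2⟩ := hcon
    have hwD := isDiag_mem_D5 w (X.tri.1 w hw)
    have huD := isDiag_mem_D5 _ (X.tri.1 _ (X.mem true))
    have hvD := isDiag_mem_D5 _ (X.tri.1 _ (X.mem false))
    have no3 : ∀ u ∈ D5, ∀ v ∈ D5, ∀ w ∈ D5, u ≠ v → u ≠ w → v ≠ w →
        (Cross u v ∨ Cross u w ∨ Cross v w) := by decide
    rcases no3 _ huD _ hvD _ hwD X.inj (Ne.symm h1) (Ne.symm h2) with hc | hc | hc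
    · exact X.tri.2.1 _ (X.mem true) _ (X.mem false) X.inj hc
    · exact X.tri.2.1 _ (X.mem true) _ hw (Ne.symm h1) hc
    · exact X.tri.2.1 _ (X.mem false) _ hw (Ne.symm h2) hc
  · rintro (rfl | rfl)
    exacts [X.mem true, X.mem false]

lemma pair_mem_L10 (X : LT5) : (X.pos true, X.pos false) ∈ L10 := by
  have hu := isDiag_mem_D5 _ (X.tri.1 _ (X.mem true))
  have hv := isDiag_mem_D5 _ (X.tri.1 _ (X.mem false))
  have hc := X.tri.2.1 _ (X.mem true) _ (X.mem false) X.inj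
  have key : ∀ u ∈ D5, ∀ v ∈ D5, u ≠ v → ¬ Cross u v → (u, v) ∈ L10 := by decide
  exact key _ hu _ hv X.inj hc

lemma flip_code {X Y : LT5} (h : LFlip X Y) :
    code (Y.pos true, Y.pos false) = code (X.pos true, X.pos false) + 1 ∨
    code (Y.pos true, Y.pos false) = code (X.pos true, X.pos false) - 1 := by
  obtain ⟨d, d', hd, hd', _hT, hpos⟩ := h
  have hX := pair_mem_L10 X
  have hY := pair_mem_L10 Y
  rw [T_eq_pair X] at hd hd'
  simp only [Finset.mem_insert, Finset.mem_singleton] at hd hd'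
  push_neg at hd'
  obtain ⟨hd'1, hd'2⟩ := hd'
  have h1 := hpos true
  have h2 := hpos false
  rcases hd with hdu | hdv
  · -- d = X.pos true
    rw [if_pos hdu.symm] at h1
    rw [if_neg (show X.pos false ≠ d by rw [hdu]; exact Ne.symm X.inj)] at h2
    have key : ∀ p ∈ L10, ∀ q ∈ L10, q.2 = p.2 → q.1 ≠ p.1 → q.1 ≠ p.2 →
        (code q = code p + 1 ∨ code q = code p - 1) := by decide
    exact key _ hX _ hY (by simpa using h2) (by rw [h1]; exact hd'1) (by rw [h1]; exact hd'2)
  · -- d = X.pos false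
    rw [if_pos hdv.symm] at h2
    rw [if_neg (show X.pos true ≠ d by rw [hdv]; exact X.inj)] at h1
    have key : ∀ p ∈ L10, ∀ q ∈ L10, q.1 = p.1 → q.2 ≠ p.1 → q.2 ≠ p.2 →
        (code q = code p + 1 ∨ code q = code p - 1) := by decide
    exact key _ hX _ hY (by simpa using h1) (by rw [h2]; exact hd'1) (by rw [h2]; exact hd'2)

lemma swap_code : ∀ p ∈ L10, code (p.2, p.1) = code p + 5 := by decide


/-- If two labeled triangulations of the convex pentagon have the same underlying
unlabeled triangulation but transposed diagonal labels, then any flip sequence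
connecting them has length at least 5. -/
theorem pentagon_label_swap_needs_five (X Y : LT5)
    (hT : Y.T = X.T) (hswap : ∀ b, Y.pos b = X.pos (!b)) :
    ∀ k : ℕ, LFlipSeq k X Y → 5 ≤ k := by
  intro k hseq
  by_contra hk
  push_neg at hk
  obtain ⟨s, hs0, hsk, hstep⟩ := hseq
  have main : ∀ i, i ≤ k → ∃ e : ℤ,
      e.natAbs ≤ i ∧ code ((s i).pos true, (s i).pos false)
        = code (X.pos true, X.pos false) + (e : ZMod 10) := by
    intro i
    induction i with
    | zero => exact fun _ => ⟨0, by simp [hs0]⟩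
    | succ n ih =>
      intro hn
      obtain ⟨e, he1, he2⟩ := ih (by omega)
      rcases flip_code (hstep n (by omega)) with h | h
      · exact ⟨e + 1, by omega, by rw [h, he2]; push_cast; ring⟩
      · exact ⟨e - 1, by omega, by rw [h, he2]; push_cast; ring⟩
  obtain ⟨e, he1, he2⟩ := main k le_rfl
  rw [hsk] at he2
  have hY1 : Y.pos true = X.pos false := by simpa using hswap true
  have hY2 : Y.pos false = X.pos true := by simpa using hswap false
  have h5 : code (Y.pos true, Y.pos false) = code (X.pos true, X.pos false) + 5 := by
    rw [hY1, hY2]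
    exact swap_code _ (pair_mem_L10 X)
  rw [h5] at he2
  have he3 : ((5 : ℤ) : ZMod 10) = ((e : ℤ) : ZMod 10) := by
    have h := add_left_cancel he2
    exact_mod_cast h
  have hdvd : (10 : ℤ) ∣ (e - 5) := by
    have : ((e - 5 : ℤ) : ZMod 10) = 0 := by push_cast; rw [← he3]; ring
    exact (ZMod.intCast_zmod_eq_zero_iff_dvd _ _).mp this
  obtain ⟨m, hm⟩ := hdvd
  omega
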